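/- Fix a permutation τ of S_n with exactly two cycles, of lengths l and n-l. Then the number of transpositions σ such that τσ is an n-cycle equals l(n-l). -/

import Mathlib

def fullCycleType {n : ℕ} (τ : Equiv.Perm (Fin n)) : Multiset ℕ :=
  τ.cycleType + Multiset.replicate (n - τ.cycleType.sum) 1

/-!
Write `g = τ * swap a b`. If `a` and `b` lie in different cycles of `τ`, then `g` follows `τ`
from `g b = τ a` around the whole `τ`-cycle of `a` back to `a`, so `a` and `b` become
`g`-equivalent, and then every `τ`-cycle lies in a single `g`-cycle: the two cycles merge. If `a`
and `b` lie in the same cycle, `g = τ` on the complement of that cycle, which therefore stays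
`g`-invariant. Hence, when the orbits of `τ` are `A` and `Aᶜ`, `g` is an `n`-cycle exactly when
`a` and `b` lie on different sides, and these transpositions are counted by `|A| * |Aᶜ|`.
-/

open Equiv Finset

namespace Equiv.Perm

variable {α : Type*} [Fintype α] [DecidableEq α] {τ : Perm α} {a b : α}

theorem cycleType_eq_singleton_card_iff (h2 : 2 ≤ Fintype.card α) :
    τ.cycleType = {Fintype.card α} ↔ ∀ x y, τ.SameCycle x y := by
  constructor
  · intro h x y
    have hcyc : τ.IsCycle := card_cycleType_eq_one.1 (by simp [h])
    have hsupp : τ.support = univ := eq_univ_of_card _ <| by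
      simpa [h] using (sum_cycleType τ).symm
    exact hcyc.sameCycle (mem_support.1 (hsupp ▸ mem_univ x))
      (mem_support.1 (hsupp ▸ mem_univ y))
  · intro h
    have hmoved : ∀ x, τ x ≠ x := by
      intro x hx
      obtain ⟨y, hy⟩ := Fintype.exists_ne_of_one_lt_card h2 x
      exact hy ((h x y).eq_of_left hx).symm
    have hsupp : τ.support = univ := eq_univ_of_forall fun x => mem_support.2 (hmoved x)
    obtain ⟨x⟩ : Nonempty α := Fintype.card_pos_iff.1 (by omega)
    rw [IsCycle.cycleType ⟨x, hmoved x, fun y _ => h x y⟩, hsupp, card_univ]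

theorem sameCycle_mul_swap_of_not_sameCycle (hab : ¬τ.SameCycle a b) :
    (τ * swap a b).SameCycle a b := by
  set g := τ * swap a b
  have hgb : g b = τ a := by simp [g]
  have horbit : ∀ i : ℕ, g.SameCycle b ((τ ^ i) (τ a)) := by
    intro i
    induction i with
    | zero => simpa [← hgb] using SameCycle.refl g b
    | succ i ih =>
      rw [pow_succ', mul_apply]
      set x := (τ ^ i) (τ a)
      by_cases hxa : x = a
      · rw [hxa, ← hgb]
        exact (SameCycle.refl g b).apply_right
      · have hxb : x ≠ b := fun hxb =>
          hab (hxb ▸ (sameCycle_pow_right.2 (SameCycle.refl τ a).apply_right))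
        have hgx : g x = τ x := by simp [g, swap_apply_of_ne_of_ne hxa hxb]
        exact hgx ▸ ih.apply_right
  obtain ⟨i, hi⟩ := (SameCycle.refl τ a).apply_left.exists_nat_pow_eq
  exact (hi ▸ horbit i).symm

theorem SameCycle.mul_swap {x y : α} (hxy : τ.SameCycle x y)
    (hg : (τ * swap a b).SameCycle a b) : (τ * swap a b).SameCycle x y := by
  set g := τ * swap a b
  have happly : ∀ z, g.SameCycle z (τ z) := by
    intro z
    by_cases hza : z = a
    · subst hza
      simpa [g] using hg.apply_right
    by_cases hzb : z = b
    · subst hzb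
      simpa [g] using hg.symm.apply_right
    simpa [g, swap_apply_of_ne_of_ne hza hzb] using (SameCycle.refl g z).apply_right
  obtain ⟨i, rfl⟩ := hxy.exists_nat_pow_eq
  clear hxy
  induction i with
  | zero => exact SameCycle.refl g x
  | succ i ih => simpa only [pow_succ', mul_apply] using ih.trans (happly _)

theorem not_sameCycle_mul_swap (hab : τ.SameCycle a b) {y : α} (hy : ¬τ.SameCycle a y) :
    ¬(τ * swap a b).SameCycle a y := by
  set g := τ * swap a b
  have hmaps : Set.MapsTo g {z | ¬τ.SameCycle a z} {z | ¬τ.SameCycle a z} := by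
    intro z hz
    have hza : z ≠ a := fun h => hz (h ▸ SameCycle.refl τ a)
    have hzb : z ≠ b := fun h => hz (h ▸ hab)
    simpa [g, swap_apply_of_ne_of_ne hza hzb] using hz
  intro hg
  obtain ⟨i, hi⟩ := hg.symm.exists_nat_pow_eq
  have := hmaps.iterate i hy
  rw [← coe_pow, hi] at this
  exact this (SameCycle.refl τ a)

section TwoOrbits

variable {A : Finset α} (hA : ∀ x y, τ.SameCycle x y ↔ (x ∈ A ↔ y ∈ A))
include hA

theorem cycleType_mul_swap_eq_singleton_card_iff (hA₁ : A.Nonempty) (hA₂ : Aᶜ.Nonempty) :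
    (τ * swap a b).cycleType = {Fintype.card α} ↔ ¬τ.SameCycle a b := by
  have h2 : 2 ≤ Fintype.card α := by
    rw [← card_add_card_compl A]
    have := hA₁.card_pos
    have := hA₂.card_pos
    omega
  rw [cycleType_eq_singleton_card_iff h2]
  constructor
  · intro hfull hab
    obtain ⟨y, hy⟩ : ∃ y, ¬τ.SameCycle a y := by
      by_cases ha : a ∈ A
      · obtain ⟨y, hy⟩ := hA₂
        exact ⟨y, by simpa [hA, ha] using hy⟩
      · obtain ⟨y, hy⟩ := hA₁
        exact ⟨y, by simpa [hA, ha] using hy⟩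
    exact not_sameCycle_mul_swap hab hy (hfull a y)
  · intro hab
    have hg := sameCycle_mul_swap_of_not_sameCycle hab
    have hcover : ∀ x, (τ * swap a b).SameCycle a x := by
      intro x
      by_cases hx : τ.SameCycle a x
      · exact hx.mul_swap hg
      · have hbx : τ.SameCycle b x := by rw [hA] at hab hx ⊢; tauto
        exact hg.trans (hbx.mul_swap hg)
    exact fun x y => (hcover x).symm.trans (hcover y)

theorem card_isSwap_mul_cycleType_eq_singleton_card (hA₁ : A.Nonempty) (hA₂ : Aᶜ.Nonempty) :
    Nat.card {σ : Perm α // σ.IsSwap ∧ (τ * σ).cycleType = {Fintype.card α}} =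
      #A * #Aᶜ := by
  have hswaps : {σ : Perm α | σ.IsSwap ∧ (τ * σ).cycleType = {Fintype.card α}}
      = (A ×ˢ Aᶜ).image (fun p => swap p.1 p.2) := by
    ext σ
    simp only [Set.mem_ofPred_eq, coe_image, coe_product, coe_compl, Set.mem_image, Set.mem_prod,
      mem_coe, Set.mem_compl_iff, Prod.exists]
    constructor
    · rintro ⟨⟨x, y, -, rfl⟩, hfull⟩
      rw [cycleType_mul_swap_eq_singleton_card_iff hA hA₁ hA₂, hA] at hfull
      by_cases hx : x ∈ A
      · exact ⟨x, y, ⟨hx, by tauto⟩, rfl⟩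
      · exact ⟨y, x, ⟨by tauto, hx⟩, swap_comm y x⟩
    · rintro ⟨x, y, ⟨hx, hy⟩, rfl⟩
      refine ⟨⟨x, y, ne_of_mem_of_not_mem hx hy, rfl⟩, ?_⟩
      rw [cycleType_mul_swap_eq_singleton_card_iff hA hA₁ hA₂, hA]
      tauto
  have hinj : Set.InjOn (fun p : α × α => swap p.1 p.2) (A ×ˢ Aᶜ : Finset (α × α)) := by
    rintro ⟨x, y⟩ hxy ⟨x', y'⟩ hxy' h
    simp only [coe_product, coe_compl, Set.mem_prod, mem_coe, Set.mem_compl_iff] at hxy hxy' h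
    have hx : x = x' := by
      by_contra hne
      have hswap_x := congrArg (· x) h
      simp only [swap_apply_left,
        swap_apply_of_ne_of_ne hne (ne_of_mem_of_not_mem hxy.1 hxy'.2)] at hswap_x
      exact ne_of_mem_of_not_mem hxy.1 hxy.2 hswap_x.symm
    subst hx
    simpa using congrArg (· x) h
  calc Nat.card {σ : Perm α // σ.IsSwap ∧ (τ * σ).cycleType = {Fintype.card α}}
      = {σ : Perm α | σ.IsSwap ∧ (τ * σ).cycleType = {Fintype.card α}}.ncard :=
        Nat.card_coe_set_eq _
    _ = #A * #Aᶜ := by rw [hswaps, Set.ncard_coe_finset, card_image_of_injOn hinj, card_product]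

end TwoOrbits

theorem IsCycle.sameCycle_iff_mem_support_iff (hτ : τ.IsCycle) (h : #τ.supportᶜ ≤ 1)
    (x y : α) :
    τ.SameCycle x y ↔ (x ∈ τ.support ↔ y ∈ τ.support) := by
  refine ⟨SameCycle.mem_support_iff, fun hxy => ?_⟩
  by_cases hx : x ∈ τ.support
  · exact hτ.sameCycle (mem_support.1 hx) (mem_support.1 (hxy.1 hx))
  · have hy : y ∉ τ.support := fun hy => hx (hxy.2 hy)
    exact (card_le_one.1 h x (mem_compl.2 hx) y (mem_compl.2 hy)).sameCycle τ

theorem sameCycle_iff_mem_support_iff_of_cycleFactorsFinset_eq_pair {c d : Perm α}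
    (hcd : c ≠ d) (hτ : τ.cycleFactorsFinset = {c, d}) (hsupp : τ.support = univ) (x y : α) :
    τ.SameCycle x y ↔ (x ∈ c.support ↔ y ∈ c.support) := by
  have hc : c ∈ τ.cycleFactorsFinset := by simp [hτ]
  have hcycleOf : ∀ z, τ.cycleOf z = c ∨ τ.cycleOf z = d := fun z => by
    have := cycleOf_mem_cycleFactorsFinset_iff.2 (hsupp ▸ mem_univ z)
    rwa [hτ, mem_insert, mem_singleton] at this
  rw [sameCycle_iff_cycleOf_eq_of_mem_support (hsupp ▸ mem_univ x) (hsupp ▸ mem_univ y),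
    ← eq_cycleOf_of_mem_cycleFactorsFinset_iff τ c hc,
    ← eq_cycleOf_of_mem_cycleFactorsFinset_iff τ c hc]
  rcases hcycleOf x with hx | hx <;> rcases hcycleOf y with hy | hy <;> simp [hx, hy, hcd, hcd.symm]

theorem sameCycle_one_iff_mem_singleton_iff (h : Fintype.card α = 2) (x₀ x y : α) :
    (1 : Perm α).SameCycle x y ↔
      (x ∈ ({x₀} : Finset α) ↔ y ∈ ({x₀} : Finset α)) := by
  have hcompl : #({x₀} : Finset α)ᶜ ≤ 1 := by simp [card_compl, h]
  rw [sameCycle_one, mem_singleton, mem_singleton]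
  refine ⟨fun hxy => hxy ▸ Iff.rfl, fun hxy => ?_⟩
  by_cases hx : x = x₀
  · exact hx.trans (hxy.1 hx).symm
  · exact card_le_one.1 hcompl x (by simpa) y (by simpa [← hxy])

theorem exists_sameCycle_iff_of_card_parts_partition_eq_two
    (h : Multiset.card τ.partition.parts = 2) :
    ∃ A : Finset α, τ.partition.parts = {#A, #Aᶜ} ∧
      ∀ x y, τ.SameCycle x y ↔ (x ∈ A ↔ y ∈ A) := by
  rw [parts_partition] at h ⊢
  have hcard : Multiset.card τ.cycleType + (Fintype.card α - #τ.support) = 2 := by simpa using h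
  have hsupp_le : #τ.support ≤ Fintype.card α := card_le_univ _
  obtain h0 | h1 | h2 : Multiset.card τ.cycleType = 0 ∨ Multiset.card τ.cycleType = 1 ∨
      Multiset.card τ.cycleType = 2 := by omega
  · obtain rfl := card_cycleType_eq_zero.1 h0
    have hα : Fintype.card α = 2 := by simpa using hcard
    obtain ⟨x₀⟩ : Nonempty α := Fintype.card_pos_iff.1 (by omega)
    refine ⟨{x₀}, by simp [card_compl, hα], sameCycle_one_iff_mem_singleton_iff hα x₀⟩
  · have hτ := card_cycleType_eq_one.1 h1
    refine ⟨τ.support, ?_, hτ.sameCycle_iff_mem_support_iff (by rw [card_compl]; omega)⟩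
    rw [hτ.cycleType, card_compl, show Fintype.card α - #τ.support = 1 by omega]
    rfl
  · obtain ⟨c, d, hcd, hτ⟩ := card_eq_two.1 (by rwa [cycleType_def, Multiset.card_map] at h2)
    have hsupp : τ.support = univ := eq_univ_of_card _ (by omega)
    refine ⟨c.support, ?_,
      sameCycle_iff_mem_support_iff_of_cycleFactorsFinset_eq_pair hcd hτ hsupp⟩
    have hct : τ.cycleType = {#c.support, #d.support} := by
      rw [cycleType_def, hτ, insert_val_of_notMem (by simpa using hcd)]
      rfl
    have hsum : #c.support + #d.support = Fintype.card α := by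
      simpa [hct, hsupp] using sum_cycleType τ
    rw [hct, hsupp, card_compl, card_univ, Nat.sub_self, Multiset.replicate_zero, add_zero,
      show Fintype.card α - #c.support = #d.support by omega]

theorem fullCycleType_eq_parts_partition {n : ℕ} (τ : Perm (Fin n)) :
    fullCycleType τ = τ.partition.parts := by
  rw [fullCycleType, parts_partition, Fintype.card_fin, sum_cycleType]

end Equiv.Perm

open Equiv.Perm in
theorem stmt_11_general (n l : ℕ) (τ : Equiv.Perm (Fin n)) (hτ : fullCycleType τ = {l, n - l}) :
    Nat.card {σ : Equiv.Perm (Fin n) // σ.IsSwap ∧ (τ * σ).cycleType = {n}}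
      = l * (n - l) := by
  rw [fullCycleType_eq_parts_partition] at hτ
  obtain ⟨A, hparts, hA⟩ :=
    exists_sameCycle_iff_of_card_parts_partition_eq_two (τ := τ) (by simp [hτ])
  have hA₁ : A.Nonempty := card_pos.1 (τ.partition.parts_pos (by simp [hparts]))
  have hA₂ : Aᶜ.Nonempty := card_pos.1 (τ.partition.parts_pos (by simp [hparts]))
  have hprod : #A * #Aᶜ = l * (n - l) := by
    simpa using congrArg Multiset.prod (hparts.symm.trans hτ)
  simpa [hprod] using card_isSwap_mul_cycleType_eq_singleton_card hA hA₁ hA₂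

/-- If `τ` has exactly two cycles, of lengths `l` and `n-l`, then the number of
transpositions `σ` such that `τσ` is an `n`-cycle equals `l(n-l)`. -/
theorem stmt_11 (n l : ℕ) (hn : 2 ≤ n) (hl : 1 ≤ l) (hln : l ≤ n - 1)
    (τ : Equiv.Perm (Fin n)) (hτ : fullCycleType τ = {l, n - l}) :
    Nat.card {σ : Equiv.Perm (Fin n) // σ.IsSwap ∧ (τ * σ).cycleType = {n}}
      = l * (n - l) :=
  stmt_11_general n l τ hτ
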